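/- arXiv:2306.11332 — 5 statements merged into one kernel-verified Lean document; each statement's English description precedes it below -/
import Mathlib

section
/- For any Hermitian positive semidefinite matrix A of size n×n (n ≥ 1), the maximum eigenvalue κ(A) satisfies κ(A) ≤ (tr(A) + sqrt(n(n-1)·‖A‖_F² − (n-1)·tr(A)²))/n, where ‖A‖_F denotes the Frobenius norm. -/
open Matrix BigOperators ComplexOrder

/-!
Samuelson's inequality: if reals `x₁, …, xₙ` have sum `t` and sum of squares `q`, then
`n xᵢ - t ≤ √(n(n-1)q - (n-1)t²)`, by Cauchy–Schwarz applied to the `n - 1` other values.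
For a Hermitian matrix take the `xᵢ` to be the eigenvalues: `tr A = ∑ λᵢ` and
`tr (Aᴴ A) = tr (A²) = ∑ λᵢ²`.
-/

/-- Largest eigenvalue of a Hermitian matrix. -/
noncomputable def lamMax {n : ℕ} {A : Matrix (Fin n) (Fin n) ℂ} (hA : A.IsHermitian) : ℝ :=
  ⨆ i, hA.eigenvalues i

namespace Finset

theorem sq_card_mul_sub_sum_le {ι : Type*} [DecidableEq ι] (s : Finset ι) (f : ι → ℝ) {i : ι}
    (hi : i ∈ s) :
    ((#s : ℝ) * f i - ∑ j ∈ s, f j) ^ 2 ≤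
      #s * (#s - 1) * ∑ j ∈ s, f j ^ 2 - (#s - 1) * (∑ j ∈ s, f j) ^ 2 := by
  have hcard : ((#(s.erase i) : ℕ) : ℝ) = #s - 1 := by
    rw [card_erase_of_mem hi, Nat.cast_sub (card_pos.mpr ⟨i, hi⟩), Nat.cast_one]
  have hCS := sq_sum_le_card_mul_sum_sq (s := s.erase i) (f := f)
  rw [hcard, sum_erase_eq_sub hi, sum_erase_eq_sub hi] at hCS
  linear_combination (#s : ℝ) * hCS

theorem card_mul_sub_sum_le_sqrt {ι : Type*} (s : Finset ι) (f : ι → ℝ) {i : ι} (hi : i ∈ s) :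
    (#s : ℝ) * f i - ∑ j ∈ s, f j ≤
      √(#s * (#s - 1) * ∑ j ∈ s, f j ^ 2 - (#s - 1) * (∑ j ∈ s, f j) ^ 2) := by
  classical
  exact (le_abs_self _).trans (Real.abs_le_sqrt (s.sq_card_mul_sub_sum_le f hi))

end Finset

theorem Matrix.IsHermitian.trace_pow_eq_sum_eigenvalues_pow {𝕜 n : Type*} [RCLike 𝕜] [Fintype n]
    [DecidableEq n] {A : Matrix n n 𝕜} (hA : A.IsHermitian) (k : ℕ) :
    (A ^ k).trace = ∑ i, (hA.eigenvalues i : 𝕜) ^ k := by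
  conv_lhs => rw [hA.spectral_theorem, ← map_pow, Unitary.conjStarAlgAut_apply, trace_mul_cycle,
    Unitary.coe_star_mul_self, one_mul, diagonal_pow, trace_diagonal]
  simp

theorem max_eigenvalue_upper_bound_general {n : ℕ}
    (A : Matrix (Fin n) (Fin n) ℂ) (hA : A.PosSemidef) :
    lamMax hA.isHermitian ≤
      ((A.trace).re +
        Real.sqrt ((n : ℝ) * (n - 1) * (Matrix.trace (Aᴴ * A)).re
          - (n - 1) * (A.trace).re ^ 2)) / n := by
  have hH := hA.isHermitian
  have htrace : A.trace.re = ∑ i, hH.eigenvalues i := by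
    simp [hH.trace_eq_sum_eigenvalues]
  have hfrob : (Aᴴ * A).trace.re = ∑ i, hH.eigenvalues i ^ 2 := by
    rw [hH.eq, ← sq, hH.trace_pow_eq_sum_eigenvalues_pow]
    simp [← Complex.ofReal_pow]
  -- `Real.iSup_le` also covers `n = 0`, where the supremum is the junk value `0`.
  refine Real.iSup_le (fun i ↦ ?_) ?_
  · have hn : (0 : ℝ) < n := Nat.cast_pos.mpr i.pos
    have hsamuelson := Finset.univ.card_mul_sub_sum_le_sqrt hH.eigenvalues (Finset.mem_univ i)
    rw [Finset.card_univ, Fintype.card_fin] at hsamuelson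
    rw [le_div_iff₀ hn, htrace, hfrob]
    linarith
  · have htrace_nonneg := RCLike.nonneg_iff.mp hA.trace_nonneg
    exact div_nonneg (add_nonneg htrace_nonneg.1 (Real.sqrt_nonneg _)) n.cast_nonneg

/-- For a Hermitian PSD matrix, κ(A) ≤ (tr A + √(n(n−1)‖A‖_F² − (n−1)(tr A)²))/n. -/
theorem max_eigenvalue_upper_bound {n : ℕ} (hn : 1 ≤ n)
    (A : Matrix (Fin n) (Fin n) ℂ) (hA : A.PosSemidef) :
    lamMax hA.isHermitian ≤
      ((A.trace).re +
        Real.sqrt ((n : ℝ) * (n - 1) * (Matrix.trace (Aᴴ * A)).re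
          - (n - 1) * (A.trace).re ^ 2)) / n :=
  max_eigenvalue_upper_bound_general A hA
end

section
/- For any Hermitian positive definite matrix A of size n×n with inverse B = A⁻¹, the minimum eigenvalue λ(A) satisfies λ(A) ≥ n / (tr(B) + sqrt(n(n-1)·‖B‖_F² − (n-1)·tr(B)²)). -/
open Matrix BigOperators ComplexOrder

noncomputable def lamMin {n : ℕ} {A : Matrix (Fin n) (Fin n) ℂ} (hA : A.IsHermitian) : ℝ :=
  ⨅ i, hA.eigenvalues i

/-!
The eigenvalues of `B = A⁻¹` are `μᵢ = 1 / λᵢ`, so `t = tr B = ∑ μᵢ` and `Q = ‖B‖_F² = ∑ μᵢ²`.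
Cauchy–Schwarz on the `n - 1` values `μⱼ`, `j ≠ i`, gives `(t - μᵢ)² ≤ (n - 1) (Q - μᵢ²)`, which
rearranges to `(n μᵢ - t)² ≤ n (n - 1) Q - (n - 1) t²`, hence `n μᵢ ≤ t + √(n (n - 1) Q - (n - 1) t²)`
(a Laguerre–Samuelson bound). Taking `μᵢ = 1 / λ(A)` gives the claim.
-/

open Finset

theorem card_mul_le_sum_add_sqrt {ι : Type*} [Fintype ι] (μ : ι → ℝ) (i : ι) :
    (Fintype.card ι : ℝ) * μ i ≤ ∑ j, μ j +
      √((Fintype.card ι : ℝ) * (Fintype.card ι - 1) * ∑ j, μ j ^ 2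
        - (Fintype.card ι - 1) * (∑ j, μ j) ^ 2) := by
  classical
  set N : ℝ := (Fintype.card ι : ℝ)
  have hCS : (∑ j ∈ univ.erase i, μ j) ^ 2 ≤ (N - 1) * ∑ j ∈ univ.erase i, μ j ^ 2 := by
    have hcard : ((univ.erase i).card : ℝ) = N - 1 := by
      rw [card_erase_of_mem (mem_univ i), card_univ, Nat.cast_pred (Fintype.card_pos_iff.2 ⟨i⟩)]
    simpa only [hcard] using sq_sum_le_card_mul_sum_sq (s := univ.erase i) (f := μ)
  rw [sum_erase_eq_sub (mem_univ i), sum_erase_eq_sub (mem_univ i)] at hCS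
  have hN : 0 ≤ N := Nat.cast_nonneg _
  have hsq : (N * μ i - ∑ j, μ j) ^ 2 ≤
      N * (N - 1) * ∑ j, μ j ^ 2 - (N - 1) * (∑ j, μ j) ^ 2 := by
    nlinarith [mul_le_mul_of_nonneg_left hCS hN]
  linarith [le_abs_self (N * μ i - ∑ j, μ j), Real.abs_le_sqrt hsq]

namespace Matrix.IsHermitian

variable {𝕜 ι : Type*} [RCLike 𝕜] [Fintype ι] [DecidableEq ι] {A : Matrix ι ι 𝕜}

theorem trace_cfc (hA : A.IsHermitian) (f : ℝ → ℝ) :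
    (cfc f A).trace = ∑ i, (f (hA.eigenvalues i) : 𝕜) := by
  rw [cfc_eq hA f, IsHermitian.cfc, Unitary.conjStarAlgAut_apply, trace_mul_cycle,
    Unitary.coe_star_mul_self, one_mul, trace_diagonal]
  rfl

theorem inv_eq_cfc (hA : A.IsHermitian) (hA' : IsUnit A) : A⁻¹ = cfc (·⁻¹ : ℝ → ℝ) A := by
  rw [nonsing_inv_eq_ringInverse, cfc_ringInverse_id A hA' hA.isSelfAdjoint]

theorem trace_inv (hA : A.IsHermitian) (hA' : IsUnit A) :
    A⁻¹.trace = ∑ i, (((hA.eigenvalues i)⁻¹ : ℝ) : 𝕜) := by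
  rw [hA.inv_eq_cfc hA', hA.trace_cfc]

theorem trace_conjTranspose_inv_mul_inv (hA : A.IsHermitian) (hA' : IsUnit A) :
    ((A⁻¹)ᴴ * A⁻¹).trace = ∑ i, (((hA.eigenvalues i)⁻¹ ^ 2 : ℝ) : 𝕜) := by
  rw [hA.inv.eq, ← sq, hA.inv_eq_cfc hA',
    ← cfc_pow _ _ _ (finite_real_spectrum.continuousOn _) hA.isSelfAdjoint, hA.trace_cfc]

end Matrix.IsHermitian

theorem min_eigenvalue_lower_bound {n : ℕ} (hn : 1 ≤ n)
    (A : Matrix (Fin n) (Fin n) ℂ) (hA : A.PosDef) :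
    (n : ℝ) / ((A⁻¹.trace).re +
        Real.sqrt ((n : ℝ) * (n - 1) * (Matrix.trace ((A⁻¹)ᴴ * A⁻¹)).re
          - (n - 1) * (A⁻¹.trace).re ^ 2)) ≤ lamMin hA.isHermitian := by
  have : Nonempty (Fin n) := Fin.pos_iff_nonempty.mp hn
  have hpos := hA.eigenvalues_pos
  rw [hA.isHermitian.trace_inv hA.isUnit,
    hA.isHermitian.trace_conjTranspose_inv_mul_inv hA.isUnit]
  simp only [Complex.re_sum, lamMin]
  refine le_ciInf fun i ↦ div_le_of_le_mul₀ ?_ (hpos i).le ?_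
  · exact add_nonneg (sum_nonneg fun j _ ↦ (inv_pos.2 (hpos j)).le) (Real.sqrt_nonneg _)
  · have key := mul_le_mul_of_nonneg_left
      (card_mul_le_sum_add_sqrt (fun j ↦ (hA.isHermitian.eigenvalues j)⁻¹) i) (hpos i).le
    rwa [Fintype.card_fin, mul_left_comm, mul_inv_cancel₀ (hpos i).ne', mul_one] at key
end

section
/- Let n ≥ 1 and let t, s be reals with t > 0 and t²/n ≤ s ≤ t². Then the maximum of max_i η_i over all vectors η ∈ ℝⁿ with η ≥ 0, Σᵢ ηᵢ = t, and Σᵢ ηᵢ² = s equals (t + sqrt(n(n-1)s − (n-1)t²))/n. -/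
open BigOperators

/-!
If `x` is a coordinate of `η ∈ ℝⁿ` with `∑ ηᵢ = t` and `∑ ηᵢ² = s`, Cauchy–Schwarz on the other
`n - 1` coordinates gives `(t - x)² ≤ (n - 1)(s - x²)`, i.e. `(n x - t)² ≤ (n - 1)(n s - t²)`,
which bounds `x`. Equality in Cauchy–Schwarz forces the other coordinates to be equal, and the
vector `(M, a, …, a)` with `M` the bound and `a = (t - M)/(n - 1)` is feasible exactly when
`t²/n ≤ s ≤ t²`.
-/

noncomputable def maxCoordBound (n : ℕ) (t s : ℝ) : ℝ :=
  (t + √(n * (n - 1) * s - (n - 1) * t ^ 2)) / n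

theorem sq_card_mul_apply_sub_sum_le {ι : Type*} [Fintype ι] (η : ι → ℝ) (j : ι) :
    (Fintype.card ι * η j - ∑ i, η i) ^ 2 ≤
      Fintype.card ι * (Fintype.card ι - 1) * ∑ i, η i ^ 2 -
        (Fintype.card ι - 1) * (∑ i, η i) ^ 2 := by
  classical
  have hcard : ((Finset.univ.erase j).card : ℝ) = Fintype.card ι - 1 := by
    rw [Finset.card_erase_of_mem (Finset.mem_univ j), Finset.card_univ,
      Nat.cast_sub (Fintype.card_pos_iff.mpr ⟨j⟩), Nat.cast_one]
  have hcs := sq_sum_le_card_mul_sum_sq (s := Finset.univ.erase j) (f := η)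
  rw [hcard, Finset.sum_erase_eq_sub (Finset.mem_univ j),
    Finset.sum_erase_eq_sub (f := fun i => η i ^ 2) (Finset.mem_univ j)] at hcs
  nlinarith [mul_le_mul_of_nonneg_left hcs (Nat.cast_nonneg (α := ℝ) (Fintype.card ι))]

theorem apply_le_maxCoordBound {ι : Type*} [Fintype ι] [Nonempty ι] (η : ι → ℝ) (j : ι) :
    η j ≤ maxCoordBound (Fintype.card ι) (∑ i, η i) (∑ i, η i ^ 2) := by
  have hN : (0 : ℝ) < Fintype.card ι := by exact_mod_cast Fintype.card_pos
  rw [maxCoordBound, le_div_iff₀ hN]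
  linarith [le_abs_self (Fintype.card ι * η j - ∑ i, η i),
    Real.abs_le_sqrt (sq_card_mul_apply_sub_sum_le η j)]

theorem exists_maxCoordBound_add_mul_eq {m : ℕ} {t s : ℝ} (ht : 0 < t)
    (hs₁ : t ^ 2 / (m + 1 : ℕ) ≤ s) (hs₂ : s ≤ t ^ 2) :
    ∃ a, 0 ≤ a ∧ a ≤ maxCoordBound (m + 1) t s ∧
      maxCoordBound (m + 1) t s + m * a = t ∧ maxCoordBound (m + 1) t s ^ 2 + m * a ^ 2 = s := by
  rcases Nat.eq_zero_or_pos m with rfl | hm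
  · refine ⟨0, le_rfl, ?_, ?_, ?_⟩ <;> norm_num [maxCoordBound] at hs₁ ⊢ <;> linarith
  have hm' : (0 : ℝ) < m := by exact_mod_cast hm
  have hn : (0 : ℝ) < (m + 1 : ℕ) := by positivity
  rw [div_le_iff₀ hn] at hs₁
  simp only [maxCoordBound, Nat.cast_add, Nat.cast_one, add_sub_cancel_right] at hs₁ ⊢
  set r := √((m + 1) * m * s - m * t ^ 2)
  have hr₀ : 0 ≤ r := Real.sqrt_nonneg _
  have hr₂ : r ^ 2 = (m + 1) * m * s - m * t ^ 2 := Real.sq_sqrt (by nlinarith)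
  have hrt : r ≤ m * t := Real.sqrt_le_iff.mpr ⟨by positivity,
    by nlinarith [mul_nonneg (by positivity : (0 : ℝ) ≤ (m + 1) * m) (sub_nonneg.mpr hs₂)]⟩
  set M := (t + r) / (m + 1)
  have hM : (m + 1) * M = t + r := mul_div_cancel₀ _ (by positivity)
  have hma : m * ((t - M) / m) = t - M := mul_div_cancel₀ _ hm'.ne'
  refine ⟨(t - M) / m, div_nonneg (by nlinarith) hm'.le, ?_, by linarith, ?_⟩
  · rw [div_le_iff₀ hm']
    nlinarith
  · have hsq : (m + 1) * (m * M ^ 2 + (t - M) ^ 2) = (m + 1) * (m * s) := by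
      linear_combination (M * (m + 1) + t + r - 2 * t) * hM + hr₂
    have hsq' := mul_left_cancel₀ (by positivity) hsq
    field_simp
    linear_combination hsq'

theorem max_coordinate_optimization {n : ℕ} (hn : 1 ≤ n) (t s : ℝ) (ht : 0 < t)
    (hs1 : t ^ 2 / n ≤ s) (hs2 : s ≤ t ^ 2) :
    IsGreatest
      { y : ℝ | ∃ η : Fin n → ℝ, (∀ i, 0 ≤ η i) ∧ (∑ i, η i) = t ∧ (∑ i, (η i) ^ 2) = s ∧
          y = ⨆ i, η i }
      ((t + Real.sqrt ((n : ℝ) * (n - 1) * s - (n - 1) * t ^ 2)) / n) := by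
  obtain ⟨m, rfl⟩ := Nat.exists_eq_add_of_le' hn
  set M := maxCoordBound (m + 1) t s
  change IsGreatest _ M
  refine ⟨?_, ?_⟩
  · obtain ⟨a, ha₀, haM, hsum, hsq⟩ := exists_maxCoordBound_add_mul_eq ht hs1 hs2
    have hle : ∀ i, (Fin.cons M fun _ => a : Fin (m + 1) → ℝ) i ≤ M :=
      Fin.forall_fin_succ.mpr ⟨le_rfl, fun _ => haM⟩
    refine ⟨Fin.cons M fun _ => a, Fin.forall_fin_succ.mpr ⟨ha₀.trans haM, fun _ => ha₀⟩,
      by simpa [Fin.sum_univ_succ] using hsum, by simpa [Fin.sum_univ_succ] using hsq, ?_⟩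
    exact (ciSup_eq_of_forall_le_of_forall_lt_exists_gt hle fun _ hw => ⟨0, hw⟩).symm
  · rintro _ ⟨η, -, rfl, rfl, rfl⟩
    exact ciSup_le fun j => by simpa using apply_le_maxCoordBound η j
end

section
/- Let η ∈ ℝⁿ with ηᵢ ≥ 0 for all i, Σᵢ ηᵢ = t, and Σᵢ ηᵢ² = s, where n ≥ 2. Then every coordinate satisfies ηⱼ ≤ (t + sqrt(n(n−1)s − (n−1)t²))/n. -/
open BigOperators

open Finset in
theorem sq_sum_sub_le_card_sub_one_mul_sum_sq_sub {ι : Type*} {s : Finset ι} {j : ι}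
    (f : ι → ℝ) (hj : j ∈ s) :
    (∑ i ∈ s, f i - f j) ^ 2 ≤ ((#s : ℝ) - 1) * (∑ i ∈ s, f i ^ 2 - f j ^ 2) := by
  classical
  have hcs := sq_sum_le_card_mul_sum_sq (s := s.erase j) (f := f)
  rwa [sum_erase_eq_sub hj, sum_erase_eq_sub hj, card_erase_of_mem hj,
    Nat.cast_sub (card_pos.mpr ⟨j, hj⟩), Nat.cast_one] at hcs

theorem le_add_sqrt_div_of_sq_mul_sub_le {x t D n : ℝ} (hn : 0 < n) (h : (n * x - t) ^ 2 ≤ D) :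
    x ≤ (t + √D) / n := by
  rw [le_div_iff₀ hn]
  linarith [le_abs_self (n * x - t), Real.abs_le_sqrt h]

theorem coordinate_upper_bound_general {n : ℕ} (t s : ℝ)
    (η : Fin n → ℝ)
    (hsum : (∑ i, η i) = t) (hsq : (∑ i, (η i) ^ 2) = s) (j : Fin n) :
    η j ≤ (t + Real.sqrt ((n : ℝ) * (n - 1) * s - (n - 1) * t ^ 2)) / n := by
  have hn : (0 : ℝ) < n := Nat.cast_pos.mpr j.pos
  have hcs := sq_sum_sub_le_card_sub_one_mul_sum_sq_sub η (Finset.mem_univ j)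
  rw [Finset.card_univ, Fintype.card_fin, hsum, hsq] at hcs
  apply le_add_sqrt_div_of_sq_mul_sub_le hn
  -- the slack `n(n-1)s - (n-1)t² - (nηⱼ - t)²` is `n` times the Cauchy–Schwarz slack `hcs`
  nlinarith [mul_le_mul_of_nonneg_left hcs hn.le]

theorem coordinate_upper_bound {n : ℕ} (hn : 2 ≤ n) (t s : ℝ)
    (η : Fin n → ℝ) (hpos : ∀ i, 0 ≤ η i)
    (hsum : (∑ i, η i) = t) (hsq : (∑ i, (η i) ^ 2) = s) (j : Fin n) :
    η j ≤ (t + Real.sqrt ((n : ℝ) * (n - 1) * s - (n - 1) * t ^ 2)) / n :=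
  coordinate_upper_bound_general t s η hsum hsq j
end

section
/- For n ≥ 2 and a Hermitian positive semidefinite n×n matrix A with eigenvalues λ₁ ≥ ... ≥ λₙ ≥ 0, equality λ₁ = (tr(A) + sqrt(n(n−1)‖A‖_F² − (n−1)tr(A)²))/n holds if and only if λ₂ = λ₃ = ... = λₙ. -/
/-!
With `T = ∑ λᵢ`, `S = ∑ λᵢ²` and `∑'` running over the indices other than the top one,
`n(n-1)S - (n-1)T² = (nλ₁ - T)² + n((n-1)∑'λᵢ² - (∑'λᵢ)²)`.
The first square has a nonnegative base since `λ₁` is maximal, and the second term is the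
Cauchy–Schwarz defect `½ ∑'∑'(λᵢ - λⱼ)² ≥ 0`. Hence the square root equals `nλ₁ - T`,
i.e. the bound is attained, exactly when that defect vanishes, i.e. when `λ₂ = ⋯ = λₙ`.
-/

open Matrix BigOperators ComplexOrder

section

open Finset

theorem Finset.sum_sum_sub_sq {ι : Type*} (s : Finset ι) (f : ι → ℝ) :
    ∑ i ∈ s, ∑ j ∈ s, (f i - f j) ^ 2 = 2 * (#s * ∑ i ∈ s, f i ^ 2 - (∑ i ∈ s, f i) ^ 2) := by
  simp only [sub_sq, sum_add_distrib, sum_sub_distrib, sum_const, nsmul_eq_mul, ← mul_sum,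
    ← sum_mul]
  ring

theorem Finset.card_mul_sum_sq_eq_sq_sum_iff {ι : Type*} (s : Finset ι) (f : ι → ℝ) :
    #s * ∑ i ∈ s, f i ^ 2 = (∑ i ∈ s, f i) ^ 2 ↔ ∀ i ∈ s, ∀ j ∈ s, f i = f j := by
  rw [← sub_eq_zero, ← mul_eq_zero_iff_left two_ne_zero, ← s.sum_sum_sub_sq f,
    sum_eq_zero_iff_of_nonneg fun i _ ↦ sum_nonneg fun j _ ↦ sq_nonneg _]
  simp only [sum_eq_zero_iff_of_nonneg fun _ _ ↦ sq_nonneg _, sq_eq_zero_iff, sub_eq_zero]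

theorem Real.sqrt_sq_add_eq_self_iff {a b : ℝ} (ha : 0 ≤ a) (hb : 0 ≤ b) :
    √(a ^ 2 + b) = a ↔ b = 0 := by
  rw [Real.sqrt_eq_iff_eq_sq (by positivity) ha]
  constructor <;> intro h <;> linarith

theorem eq_sum_add_sqrt_div_card_iff_of_forall_le {ι : Type*} [Fintype ι] [DecidableEq ι]
    (f : ι → ℝ) {k : ι} (hk : ∀ i, f i ≤ f k) :
    f k = (∑ i, f i + √(Fintype.card ι * (Fintype.card ι - 1) * ∑ i, f i ^ 2
        - (Fintype.card ι - 1) * (∑ i, f i) ^ 2)) / Fintype.card ι ↔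
      ∀ i ≠ k, ∀ j ≠ k, f i = f j := by
  set N : ℝ := (Fintype.card ι : ℝ)
  set s := univ.erase k
  have hN : 0 < N := by simpa [N] using Fintype.card_pos_iff.2 ⟨k⟩
  have hs : (#s : ℝ) = N - 1 := by
    rw [card_erase_of_mem (mem_univ k), card_univ, Nat.cast_pred (Fintype.card_pos_iff.2 ⟨k⟩)]
  have hsum (g : ι → ℝ) : ∑ i, g i = g k + ∑ i ∈ s, g i := (add_sum_erase _ _ (mem_univ k)).symm
  have hgap : 0 ≤ N * f k - ∑ i, f i := by
    have hrest : ∑ i ∈ s, f i ≤ #s * f k := by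
      simpa using sum_le_card_nsmul s f (f k) fun i _ ↦ hk i
    rw [hs] at hrest
    rw [hsum]
    linarith
  have hdefect : 0 ≤ #s * ∑ i ∈ s, f i ^ 2 - (∑ i ∈ s, f i) ^ 2 :=
    sub_nonneg.2 sq_sum_le_card_mul_sum_sq
  have hdisc : N * (N - 1) * ∑ i, f i ^ 2 - (N - 1) * (∑ i, f i) ^ 2
      = (N * f k - ∑ i, f i) ^ 2 + N * (#s * ∑ i ∈ s, f i ^ 2 - (∑ i ∈ s, f i) ^ 2) := by
    rw [hsum, hsum, hs]
    ring
  rw [hdisc, eq_div_iff hN.ne', mul_comm, eq_comm, ← eq_sub_iff_add_eq',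
    Real.sqrt_sq_add_eq_self_iff hgap (mul_nonneg hN.le hdefect), mul_eq_zero, or_iff_right hN.ne',
    sub_eq_zero, card_mul_sum_sq_eq_sq_sum_iff]
  simp [s]

end

theorem Matrix.IsHermitian.trace_mul_self_eq_sum_eigenvalues_sq {𝕜 n : Type*} [RCLike 𝕜]
    [Fintype n] [DecidableEq n] {A : Matrix n n 𝕜} (hA : A.IsHermitian) :
    (A * A).trace = ∑ i, (hA.eigenvalues i : 𝕜) ^ 2 := by
  conv_lhs => rw [hA.spectral_theorem]
  rw [← map_mul, diagonal_mul_diagonal, Unitary.conjStarAlgAut_apply, trace_mul_cycle,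
    Unitary.coe_star_mul_self, one_mul, trace_diagonal]
  simp [sq]

theorem max_eigenvalue_bound_equality_iff {n : ℕ} (hn : 2 ≤ n)
    (A : Matrix (Fin n) (Fin n) ℂ) (hA : A.PosSemidef)
    (μ : Fin n → ℝ) (hanti : Antitone μ)
    (hperm : ∃ σ : Equiv.Perm (Fin n), ∀ i, μ i = hA.isHermitian.eigenvalues (σ i)) :
    μ ⟨0, by omega⟩ =
        ((A.trace).re +
          Real.sqrt ((n : ℝ) * (n - 1) * (Matrix.trace (Aᴴ * A)).re
            - (n - 1) * (A.trace).re ^ 2)) / n ↔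
      ∀ i j : Fin n, i ≠ ⟨0, by omega⟩ → j ≠ ⟨0, by omega⟩ → μ i = μ j := by
  obtain ⟨σ, hσ⟩ := hperm
  have hT : (A.trace).re = ∑ i, μ i := by
    simp [hA.isHermitian.trace_eq_sum_eigenvalues, hσ, Equiv.sum_comp σ]
  have hS : (Aᴴ * A).trace.re = ∑ i, μ i ^ 2 := by
    rw [hA.isHermitian.eq, hA.isHermitian.trace_mul_self_eq_sum_eigenvalues_sq]
    simp [hσ, ← Complex.ofReal_pow, Equiv.sum_comp σ (fun i ↦ hA.isHermitian.eigenvalues i ^ 2)]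
  have h := eq_sum_add_sqrt_div_card_iff_of_forall_le μ (k := ⟨0, by omega⟩)
    fun i ↦ hanti (Nat.zero_le i)
  rw [Fintype.card_fin] at h
  rw [hT, hS, h]
  exact ⟨fun h i j hi hj ↦ h i hi j hj, fun h i hi j hj ↦ h i j hi hj⟩
end
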